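/- Let u, v be pure unit quaternions with angle α between them (so that Re(uv) = -cos α), s > 0, and define ρ_n(s) = (Q_n(s) Q'_{n+1}(s) − Q_{n+1}(s) Q'_n(s))/h_n and δ_n(s) = Q_n(s) Q_{n+1}(s)/(s h_n). Then with K_n(us, vs) = (1/2)[ρ_n(s) − δ_n(s)] − (1/2)[ρ_n(s) + δ_n(s)] u v, the 2×2 Moore determinant det [[K_n(us,us), K_n(us,vs)],[K_n(vs,us), K_n(vs,vs)]] equals (ρ_n(s)² − δ_n(s)²)·(1 − cos α)/2. -/

import Mathlib

open Polynomial Quaternion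

noncomputable def β (n : ℕ) : ℝ := if Odd n then n + 2 else n

noncomputable def Q : ℕ → Polynomial ℝ
  | 0 => 1
  | 1 => X
  | (n + 2) => X * Q (n + 1) - C (β (n + 1)) * Q n

noncomputable def h (n : ℕ) : ℝ :=
  if Odd n then (n.factorial : ℝ) * (n + 2) else ((n + 1).factorial : ℝ)

/-- `ρ_n(s) = (Q_n(s) Q'_{n+1}(s) − Q_{n+1}(s) Q'_n(s))/h_n`. -/
noncomputable def ρ (n : ℕ) (s : ℝ) : ℝ :=
  ((Q n).eval s * (derivative (Q (n + 1))).eval s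
    - (Q (n + 1)).eval s * (derivative (Q n)).eval s) / h n

/-- `δ_n(s) = Q_n(s) Q_{n+1}(s)/(s h_n)`. -/
noncomputable def δ (n : ℕ) (s : ℝ) : ℝ :=
  (Q n).eval s * (Q (n + 1)).eval s / (s * h n)

/-- `K_n(us, vs) = (1/2)[ρ_n(s) − δ_n(s)] − (1/2)[ρ_n(s) + δ_n(s)] u v`. -/
noncomputable def Kf (n : ℕ) (s : ℝ) (u v : ℍ[ℝ]) : ℍ[ℝ] :=
  ((ρ n s - δ n s) / 2) • (1 : ℍ[ℝ]) - ((ρ n s + δ n s) / 2) • (u * v)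

/-!
A pure quaternion `u` satisfies `u * u = -normSq u`, so for pure unit `u` the diagonal entry
`K_n(us, us)` collapses to the real number `ρ_n(s)`. The off-diagonal entry has the form
`a - b w` with `w = u v` a unit quaternion of real part `-cos α`, whence
`|K_n(us, vs)|² = a² + 2ab cos α + b²`; with `a, b = (ρ ∓ δ)/2` the determinant
`ρ² - |K_n(us, vs)|²` is `(ρ² - δ²)(1 - cos α)/2`.
-/

namespace Quaternion

variable {R : Type*} [CommRing R]

theorem mul_self_of_re_eq_zero {u : ℍ[R]} (hu : u.re = 0) :
    u * u = -((normSq u : R) : ℍ[R]) := by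
  ext <;> simp only [re_mul, imI_mul, imJ_mul, imK_mul, re_neg, imI_neg, imJ_neg, imK_neg,
    re_coe, imI_coe, imJ_coe, imK_coe, normSq_def', hu] <;> ring

theorem normSq_smul_one_sub_smul (a b : R) (w : ℍ[R]) :
    normSq (a • (1 : ℍ[R]) - b • w) = a ^ 2 - 2 * a * b * w.re + b ^ 2 * normSq w := by
  simp only [normSq_def', re_sub, imI_sub, imJ_sub, imK_sub, re_smul, imI_smul, imJ_smul,
    imK_smul, re_one, imI_one, imJ_one, imK_one, smul_eq_mul]
  ring

theorem normSq_eq_one_of_norm_eq_one {u : ℍ[ℝ]} (hu : ‖u‖ = 1) : normSq u = 1 := by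
  rw [normSq_eq_norm_mul_self, hu, mul_one]

end Quaternion

theorem Kf_self {u : ℍ[ℝ]} (hu : u.re = 0) (hu1 : normSq u = 1) (n : ℕ) (s : ℝ) :
    Kf n s u u = (ρ n s : ℍ[ℝ]) := by
  rw [Kf, mul_self_of_re_eq_zero hu, hu1, Quaternion.coe_one, smul_neg, sub_neg_eq_add,
    ← add_smul, Algebra.smul_def, mul_one, Quaternion.algebraMap_def]
  congr 1
  ring

theorem normSq_Kf {u v : ℍ[ℝ]} (hu1 : normSq u = 1) (hv1 : normSq v = 1) (n : ℕ) (s : ℝ) :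
    normSq (Kf n s u v)
      = (ρ n s ^ 2 + δ n s ^ 2) / 2 - (ρ n s ^ 2 - δ n s ^ 2) / 2 * (u * v).re := by
  rw [Kf, normSq_smul_one_sub_smul, map_mul, hu1, hv1]
  ring

theorem stmt17_general (n : ℕ) (u v : ℍ[ℝ])
    (hu : u.re = 0) (hu1 : ‖u‖ = 1) (hv : v.re = 0) (hv1 : ‖v‖ = 1)
    (α : ℝ) (hα : (u * v).re = -Real.cos α) (s : ℝ) :
    (Kf n s u u).re * (Kf n s v v).re - ‖Kf n s u v‖ ^ 2
      = (ρ n s ^ 2 - δ n s ^ 2) * (1 - Real.cos α) / 2 := by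
  have hnu := normSq_eq_one_of_norm_eq_one hu1
  have hnv := normSq_eq_one_of_norm_eq_one hv1
  rw [Kf_self hu hnu, Kf_self hv hnv, sq, ← normSq_eq_norm_mul_self, normSq_Kf hnu hnv, hα,
    re_coe]
  ring

theorem stmt17 (n : ℕ) (u v : ℍ[ℝ])
    (hu : u.re = 0) (hu1 : ‖u‖ = 1) (hv : v.re = 0) (hv1 : ‖v‖ = 1)
    (α : ℝ) (hα : (u * v).re = -Real.cos α) (s : ℝ) (hs : 0 < s) :
    (Kf n s u u).re * (Kf n s v v).re - ‖Kf n s u v‖ ^ 2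
      = (ρ n s ^ 2 - δ n s ^ 2) * (1 - Real.cos α) / 2 :=
  stmt17_general n u v hu hu1 hv hv1 α hα s
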